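/- arXiv:1307.7813 — 3 statements merged into one kernel-verified Lean document; each statement's English description precedes it below -/
import Mathlib

section
/- Let G be a directed graph with nonnegative rational arc weights and let s1, s2 be two distinct vertices and α1, α2 ∈ ℚ≥0. Then there exists a pair of compatible paths for s1 and s2 with bounds α1, α2 in G if and only if there exists a vertex t such that d(s1,t) ≤ α1 and d(s2,t) ≤ α2. -/
/-- `l` is a simple path (no repeated vertices) from `x` to `y` in the directed
graph with arc relation `A`, given as its list of vertices. -/
def IsPath {V : Type*} (A : V → V → Prop) (x y : V) (l : List V) : Prop :=
  l.Chain' A ∧ l.Nodup ∧ l.head? = some x ∧ l.getLast? = some y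

/-- The length of a path (given by its vertex list) w.r.t. arc weights `w`:
the sum of the weights of its arcs. -/
def pathLen {V : Type*} (w : V → V → ℚ) (l : List V) : ℚ :=
  ((l.zip l.tail).map fun p => w p.1 p.2).sum

/-- `d(x,y) ≤ α`: there is a path from `x` to `y` of length at most `α`.
(On a finite graph, this is equivalent to the shortest-path distance from `x`
to `y` being at most `α`.) -/
def distLE {V : Type*} (A : V → V → Prop) (w : V → V → ℚ) (x y : V) (α : ℚ) : Prop :=
  ∃ l, IsPath A x y l ∧ pathLen w l ≤ α

/-! Given paths `p1 : s1 ⇝ t` and `p2 : s2 ⇝ t`, let `x` be the first vertex of `p2` that lies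
on `p1`. Cutting both paths at `x` yields two paths to `x` that meet only in `x`, and since the
weights are nonnegative, cutting a path off does not make it longer. -/

section PathLen

variable {V : Type*} {A : V → V → Prop} {w : V → V → ℚ}

@[simp]
lemma pathLen_cons_cons (a b : V) (l : List V) :
    pathLen w (a :: b :: l) = w a b + pathLen w (b :: l) := by
  simp [pathLen]

lemma pathLen_nonneg (hw : ∀ u v, A u v → 0 ≤ w u v) :
    ∀ {l : List V}, l.IsChain A → 0 ≤ pathLen w l
  | [], _ | [_], _ => le_rfl
  | a :: b :: l, h => by
    obtain ⟨hab, hl⟩ := List.isChain_cons_cons.mp h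
    rw [pathLen_cons_cons]
    exact add_nonneg (hw a b hab) (pathLen_nonneg hw hl)

lemma pathLen_le_pathLen_append (hw : ∀ u v, A u v → 0 ≤ w u v) :
    ∀ {p q : List V}, (p ++ q).IsChain A → pathLen w p ≤ pathLen w (p ++ q)
  | [], _, h | [_], _, h => pathLen_nonneg hw h
  | a :: b :: p, q, h => by
    simp only [List.cons_append, pathLen_cons_cons, add_le_add_iff_left]
    exact pathLen_le_pathLen_append hw (List.isChain_cons_cons.mp h).2

end PathLen

section IsPath

variable {V : Type*} {A : V → V → Prop} {w : V → V → ℚ} {x y z : V} {p q : List V}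

lemma IsPath.truncate (h : IsPath A x y (p ++ z :: q)) : IsPath A x z (p ++ [z]) := by
  obtain ⟨hchain, hnodup, hhead, -⟩ := h
  have hpre : p ++ [z] <+: p ++ z :: q := ⟨q, by simp⟩
  refine ⟨hchain.prefix hpre, hnodup.sublist hpre.sublist, ?_, by simp⟩
  cases p <;> simpa using hhead

lemma IsPath.pathLen_truncate_le (hw : ∀ u v, A u v → 0 ≤ w u v)
    (h : IsPath A x y (p ++ z :: q)) : pathLen w (p ++ [z]) ≤ pathLen w (p ++ z :: q) := by
  have hchain : (p ++ z :: q).IsChain A := h.1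
  rw [List.append_cons] at hchain
  simpa using pathLen_le_pathLen_append hw hchain

end IsPath

lemma List.exists_split_at_first_common {α : Type*} [DecidableEq α] {l₁ l₂ : List α} {t : α}
    (h₁ : t ∈ l₁) (h₂ : t ∈ l₂) :
    ∃ x a b c d, l₁ = a ++ x :: b ∧ l₂ = c ++ x :: d ∧
      ∀ v, v ∈ a ++ [x] → v ∈ c ++ [x] → v = x := by
  obtain ⟨x, hfind⟩ := Option.isSome_iff_exists.mp
    (List.find?_isSome (p := (· ∈ l₁)).mpr ⟨t, h₂, by simpa using h₁⟩)
  obtain ⟨hx, c, d, rfl, hc⟩ := List.find?_eq_some_iff_append.mp hfind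
  obtain ⟨a, b, rfl⟩ := List.append_of_mem (of_decide_eq_true hx)
  refine ⟨_, a, b, c, d, rfl, rfl, fun v hva hvc => ?_⟩
  rcases List.mem_append.mp hvc with hvc | hvc
  · have := hc v hvc
    simp_all
  · simpa using hvc

theorem stmt0_general {V : Type*} (A : V → V → Prop) (w : V → V → ℚ)
    (hw : ∀ u v, A u v → 0 ≤ w u v)
    (s1 s2 : V) (α1 α2 : ℚ) :
    (∃ (t : V) (p1 p2 : List V),
        IsPath A s1 t p1 ∧ IsPath A s2 t p2 ∧
        (∀ v, v ∈ p1 → v ∈ p2 → v = t) ∧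
        pathLen w p1 ≤ α1 ∧ pathLen w p2 ≤ α2) ↔
      ∃ t : V, distLE A w s1 t α1 ∧ distLE A w s2 t α2 := by
  classical
  refine ⟨fun ⟨t, p1, p2, h1, h2, _, hl1, hl2⟩ => ⟨t, ⟨p1, h1, hl1⟩, p2, h2, hl2⟩, ?_⟩
  rintro ⟨t, ⟨p1, hp1, hl1⟩, p2, hp2, hl2⟩
  obtain ⟨x, a, b, c, d, rfl, rfl, hdisjoint⟩ := List.exists_split_at_first_common
    (List.mem_of_getLast? hp1.2.2.2) (List.mem_of_getLast? hp2.2.2.2)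
  exact ⟨x, a ++ [x], c ++ [x], hp1.truncate, hp2.truncate, hdisjoint,
    (hp1.pathLen_truncate_le hw).trans hl1, (hp2.pathLen_truncate_le hw).trans hl2⟩

/-- There exists a pair of compatible paths for `s1 ≠ s2` with bounds `α1, α2`
(two paths `p1 : s1 ⇝ t`, `p2 : s2 ⇝ t` sharing no vertex other than `t`, with
`|p1| ≤ α1`, `|p2| ≤ α2`) iff there is a vertex `t` with `d(s1,t) ≤ α1` and
`d(s2,t) ≤ α2`. -/
theorem stmt0 {V : Type*} [Fintype V] (A : V → V → Prop) (w : V → V → ℚ)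
    (hw : ∀ u v, A u v → 0 ≤ w u v)
    (s1 s2 : V) (hs : s1 ≠ s2) (α1 α2 : ℚ) (hα1 : 0 ≤ α1) (hα2 : 0 ≤ α2) :
    (∃ (t : V) (p1 p2 : List V),
        IsPath A s1 t p1 ∧ IsPath A s2 t p2 ∧
        (∀ v, v ∈ p1 → v ∈ p2 → v = t) ∧
        pathLen w p1 ≤ α1 ∧ pathLen w p2 ≤ α2) ↔
      ∃ t : V, distLE A w s1 t α1 ∧ distLE A w s2 t α2 :=
  stmt0_general A w hw s1 s2 α1 α2
end

section
/- Let G = (V,E) be a directed graph with n = |V| ≥ 2 vertices and let s ≠ t be two of its vertices. Construct G′ from G by adding new vertices s′, t′ and n−2 further new vertices u1, …, u_{n−2}, together with the arcs (s,s′), (t,t′), and the arcs of the directed path s′ → u1 → ⋯ → u_{n−2} → t′ (so that this new path from s′ to t′ has exactly n vertices). Then there exist vertices x, y of G′ and two paths from x to y in G′ that share no vertices other than x and y and each contain at least n+1 vertices, if and only if G contains a Hamiltonian path from s to t (a path from s to t visiting every vertex of V exactly once). -/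
/-- The arcs of the graph `G'` obtained from `G = (V,A)` by adding the new
vertices `s' = inr 0`, `u_1 = inr 1`, …, `u_{n-2} = inr (n-2)`, `t' = inr (n-1)`
together with the arcs `(s,s')`, `(t,t')` and the arcs of the directed path
`s' → u_1 → ⋯ → u_{n-2} → t'`. -/
def extArcs {V : Type*} (A : V → V → Prop) (s t : V) (n : ℕ) :
    (V ⊕ Fin n) → (V ⊕ Fin n) → Prop := fun x y =>
  (∃ a b : V, x = Sum.inl a ∧ y = Sum.inl b ∧ A a b) ∨
  (∃ j : Fin n, x = Sum.inl s ∧ y = Sum.inr j ∧ (j : ℕ) = 0) ∨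
  (∃ j : Fin n, x = Sum.inl t ∧ y = Sum.inr j ∧ (j : ℕ) = n - 1) ∨
  (∃ i j : Fin n, x = Sum.inr i ∧ y = Sum.inr j ∧ (j : ℕ) = (i : ℕ) + 1)


section Lists

variable {α : Type*}

theorem List.IsChain.getElem_add_of_forced {R : α → α → Prop} {l m : List α} (hl : l.IsChain R)
    (hm : ∀ (i : ℕ) (hi : i < m.length) (z : α), R m[i] z → ∃ h : i + 1 < m.length, z = m[i + 1])
    {k j : ℕ} (hk : k < l.length) (hj : j < m.length) (hkj : l[k] = m[j]) :
    ∀ (i : ℕ) (hi : k + i < l.length), ∃ h : j + i < m.length, l[k + i] = m[j + i]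
  | 0, _ => ⟨hj, hkj⟩
  | i + 1, hi => by
    obtain ⟨h, heq⟩ := getElem_add_of_forced hl hm hk hj hkj i (by omega)
    obtain ⟨h', hz⟩ := hm _ h _ (heq ▸ hl.getElem (k + i) (by omega))
    exact ⟨h', by simpa only [Nat.add_assoc] using hz⟩

theorem List.length_add_length_le_card_union_add_two [DecidableEq α] {l₁ l₂ : List α}
    (h₁ : l₁.Nodup) (h₂ : l₂.Nodup) {x y : α} (hxy : ∀ z ∈ l₁, z ∈ l₂ → z = x ∨ z = y) :
    l₁.length + l₂.length ≤ (l₁.toFinset ∪ l₂.toFinset).card + 2 := by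
  have hinter : (l₁.toFinset ∩ l₂.toFinset).card ≤ 2 := by
    refine (Finset.card_le_card fun z hz => ?_).trans (Finset.card_le_two (a := x) (b := y))
    simp only [Finset.mem_inter, List.mem_toFinset] at hz
    simpa using hxy z hz.1 hz.2
  have := Finset.card_union_add_card_inter l₁.toFinset l₂.toFinset
  rw [List.toFinset_card_of_nodup h₁, List.toFinset_card_of_nodup h₂] at this
  omega

theorem List.length_add_length_le_card_add_two [Fintype α] {l₁ l₂ : List α}
    (h₁ : l₁.Nodup) (h₂ : l₂.Nodup) {x y : α} (hxy : ∀ z ∈ l₁, z ∈ l₂ → z = x ∨ z = y) :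
    l₁.length + l₂.length ≤ Fintype.card α + 2 := by
  classical
  have := Finset.card_le_univ (l₁.toFinset ∪ l₂.toFinset)
  have := List.length_add_length_le_card_union_add_two h₁ h₂ hxy
  omega

theorem List.mem_or_mem_of_card_add_two_le [Fintype α] {l₁ l₂ : List α}
    (h₁ : l₁.Nodup) (h₂ : l₂.Nodup) {x y : α} (hxy : ∀ z ∈ l₁, z ∈ l₂ → z = x ∨ z = y)
    (hlen : Fintype.card α + 2 ≤ l₁.length + l₂.length) (z : α) : z ∈ l₁ ∨ z ∈ l₂ := by
  classical
  have huniv : l₁.toFinset ∪ l₂.toFinset = Finset.univ := by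
    refine Finset.eq_univ_of_card _ (le_antisymm (Finset.card_le_univ _) ?_)
    have := List.length_add_length_le_card_union_add_two h₁ h₂ hxy
    omega
  have hz := Finset.mem_univ z
  rw [← huniv, Finset.mem_union, List.mem_toFinset, List.mem_toFinset] at hz
  exact hz

theorem List.Nodup.length_eq_card [Fintype α] {l : List α} (h : l.Nodup) (hl : ∀ a, a ∈ l) :
    l.length = Fintype.card α := by
  classical
  rw [← List.toFinset_card_of_nodup h, ← Finset.card_univ]
  exact congrArg Finset.card (Finset.eq_univ_of_forall fun a => List.mem_toFinset.2 (hl a))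

theorem List.exists_eq_map_inl {β : Type*} {l : List (α ⊕ β)} (hl : ∀ z ∈ l, z.isLeft) :
    ∃ p : List α, l = p.map Sum.inl := by
  induction l with
  | nil => exact ⟨[], rfl⟩
  | cons z l ih =>
    obtain ⟨p, rfl⟩ := ih fun w hw => hl w (List.mem_cons_of_mem z hw)
    obtain ⟨a, rfl⟩ := Sum.isLeft_iff.mp (hl z List.mem_cons_self)
    exact ⟨a :: p, rfl⟩

end Lists

section Paths

variable {α : Type*} {R : α → α → Prop} {x y : α} {l : List α}

theorem isPath_iff : IsPath R x y l ↔
    l.IsChain R ∧ l.Nodup ∧ l.head? = some x ∧ l.getLast? = some y := Iff.rfl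

namespace IsPath

theorem isChain (h : IsPath R x y l) : l.IsChain R := h.1

theorem nodup (h : IsPath R x y l) : l.Nodup := h.2.1

theorem head?_eq (h : IsPath R x y l) : l.head? = some x := h.2.2.1

theorem getLast?_eq (h : IsPath R x y l) : l.getLast? = some y := h.2.2.2

theorem length_pos (h : IsPath R x y l) : 0 < l.length := by
  cases l with
  | nil => simp [IsPath] at h
  | cons => simp

theorem getElem_zero (h : IsPath R x y l) : l[0]'h.length_pos = x := by
  have hx := h.head?_eq
  rw [List.head?_eq_getElem?, List.getElem?_eq_getElem h.length_pos] at hx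
  exact Option.some.inj hx

theorem getElem_eq_right (h : IsPath R x y l) {i : ℕ} (hi : i + 1 = l.length) :
    l[i]'(by omega) = y := by
  have hy := h.getLast?_eq
  rw [List.getLast?_eq_getElem?, List.getElem?_eq_getElem (by omega)] at hy
  exact (getElem_congr_idx (by omega)).trans (Option.some.inj hy)

theorem getElem_ne_left (h : IsPath R x y l) {i : ℕ} (hi : i < l.length) (hi0 : 0 < i) :
    l[i] ≠ x := by
  rw [← h.getElem_zero, Ne, h.nodup.getElem_inj_iff]
  omega

theorem getElem_ne_right (h : IsPath R x y l) {i : ℕ} (hi : i + 1 < l.length) : l[i] ≠ y := by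
  rw [← h.getElem_eq_right (i := l.length - 1) (by omega), Ne, h.nodup.getElem_inj_iff]
  omega

end IsPath

end Paths

section Extension

variable {V : Type*} {A : V → V → Prop} {s t : V} {n : ℕ}

@[simp]
def extPath (s : V) (n : ℕ) : List (V ⊕ Fin n) := .inl s :: List.ofFn .inr

theorem extArcs_inr_left {i : Fin n} {z : V ⊕ Fin n} (h : extArcs A s t n (.inr i) z) :
    ∃ h : (i : ℕ) + 1 < n, z = .inr ⟨i + 1, h⟩ := by
  rcases h with ⟨_, _, h, -⟩ | ⟨_, h, -⟩ | ⟨_, h, -⟩ | ⟨_, j, h, rfl, hj⟩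
  iterate 3 exact absurd h Sum.inr_ne_inl
  obtain rfl := Sum.inr_injective h
  exact ⟨hj ▸ j.isLt, congrArg Sum.inr (Fin.ext hj)⟩

theorem extArcs_inr_right {j : Fin n} {w : V ⊕ Fin n} (h : extArcs A s t n w (.inr j)) :
    (w = .inl s ∧ (j : ℕ) = 0) ∨ (w = .inl t ∧ (j : ℕ) = n - 1) ∨
      ∃ i : Fin n, w = .inr i ∧ (j : ℕ) = i + 1 := by
  simpa [extArcs] using h

theorem List.IsChain.extArcs_getElem_of_eq_inr {p : List (V ⊕ Fin n)}
    (hp : p.IsChain (extArcs A s t n)) {k : ℕ} {hk : k < p.length} {j : Fin n}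
    (hkj : p[k] = .inr j) {i : ℕ} (hki : k ≤ i) (hi : i < p.length) :
    ∃ h : j + (i - k) < n, p[i] = .inr ⟨j + (i - k), h⟩ := by
  obtain ⟨d, rfl⟩ := Nat.exists_eq_add_of_le hki
  have hm : ∀ (a : ℕ) (ha : a < (List.ofFn (Sum.inr : Fin n → V ⊕ Fin n)).length) z,
      extArcs A s t n (List.ofFn Sum.inr)[a] z →
        ∃ h : a + 1 < (List.ofFn (Sum.inr : Fin n → V ⊕ Fin n)).length,
          z = (List.ofFn Sum.inr)[a + 1] := by
    intro a ha z h
    simp only [List.length_ofFn, List.getElem_ofFn] at ha h ⊢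
    exact extArcs_inr_left h
  obtain ⟨h, hd⟩ := hp.getElem_add_of_forced hm hk (j := j) (by simp) (by simpa using hkj) d hi
  simp only [List.length_ofFn, List.getElem_ofFn] at h hd
  exact ⟨by omega, by simpa using hd⟩

theorem isPath_extPath (hn : 0 < n) :
    IsPath (extArcs A s t n) (.inl s) (.inr ⟨n - 1, by omega⟩) (extPath s n) := by
  rw [isPath_iff, extPath]
  refine ⟨?_, ?_, rfl, ?_⟩
  · obtain ⟨m, rfl⟩ := Nat.exists_eq_add_of_lt hn
    rw [List.ofFn_succ, List.isChain_cons_cons, ← List.ofFn_succ, List.isChain_ofFn]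
    exact ⟨Or.inr (Or.inl ⟨_, rfl, rfl, rfl⟩),
      fun i hi => Or.inr (Or.inr (Or.inr ⟨_, _, rfl, rfl, rfl⟩))⟩
  · simp [List.nodup_ofFn, Sum.inr_injective]
  · rw [List.getLast?_cons, List.getLast?_eq_getElem?]
    simp [hn]

theorem isPath_extArcs_map_inl_append_iff (hn : 2 ≤ n) {p : List V} :
    IsPath (extArcs A s t n) (.inl s) (.inr ⟨n - 1, by omega⟩)
      (p.map .inl ++ [.inr ⟨n - 1, by omega⟩]) ↔ IsPath A s t p := by
  rcases p.eq_nil_or_concat with rfl | ⟨p, v, rfl⟩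
  · simp [IsPath]
  have hn1 : n - 1 ≠ 0 := by omega
  simp [isPath_iff, List.isChain_append, List.isChain_map, extArcs, hn1,
    List.nodup_append, List.nodup_map_iff Sum.inl_injective]
  tauto

theorem eq_extPath_of_isPath_of_isPath (hn : 2 ≤ n) {x y : V ⊕ Fin n} {p₁ p₂ : List (V ⊕ Fin n)}
    (h₁ : IsPath (extArcs A s t n) x y p₁) (h₂ : IsPath (extArcs A s t n) x y p₂)
    (hdisj : ∀ z ∈ p₁, z ∈ p₂ → z = x ∨ z = y) (hl₁ : p₁.length = n + 1)
    (hl₂ : p₂.length = n + 1) (h0 : .inr ⟨0, by omega⟩ ∈ p₁) :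
    p₁ = extPath s n := by
  obtain ⟨k, hk, hk0⟩ := List.getElem_of_mem h0
  have follow := fun {i} => h₁.isChain.extArcs_getElem_of_eq_inr hk0 (i := i)
  obtain ⟨k, rfl⟩ : ∃ k', k = k' + 1 := by
    obtain ⟨hlt, -⟩ := follow (i := n) (by omega) (by omega)
    exact Nat.exists_eq_add_one.2 (by simp at hlt; omega)
  have hs : p₁[k] = .inl s := by
    have harc := h₁.isChain.getElem k (by omega)
    rw [hk0] at harc
    rcases extArcs_inr_right harc with ⟨h, -⟩ | ⟨-, h⟩ | ⟨_, -, h⟩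
    · exact h
    · simp at h; omega
    · simp at h
  obtain rfl : k = 0 := by
    by_contra hk
    have hshared : p₂[n - 1] = p₁[n - 1] := by
      have harc := h₂.isChain.getElem (n - 1) (by omega)
      rw [h₂.getElem_eq_right (i := n - 1 + 1) (by omega),
        ← h₁.getElem_eq_right (i := n) (by omega)] at harc
      obtain ⟨_, hy⟩ := follow (i := n) (by omega) (by omega)
      rw [hy] at harc
      rcases extArcs_inr_right harc with ⟨h, hj⟩ | ⟨-, hj⟩ | ⟨i, h, hj⟩
      · rw [h, ← hs]
        exact getElem_congr_idx (by simp at hj; omega)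
      · simp at hj; omega
      · simp only [zero_add] at hj
        obtain ⟨_, h'⟩ := follow (i := n - 1) (by omega) (by omega)
        rw [h, h', Sum.inr.injEq, Fin.ext_iff]
        simp only [zero_add]
        omega
    rcases hdisj _ (List.getElem_mem _) (hshared ▸ List.getElem_mem _) with h | h
    · exact h₁.getElem_ne_left _ (by omega) h
    · exact h₁.getElem_ne_right (by omega) h
  refine List.ext_getElem (by simp [hl₁]) fun i hi _ => ?_
  rcases i with _ | i
  · exact hs
  · obtain ⟨_, h⟩ := follow (i := i + 1) (by omega) hi
    simpa using h

theorem exists_hamiltonian_of_isPath_of_isPath (hn : 2 ≤ n) {x y : V ⊕ Fin n}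
    {p₁ p₂ : List (V ⊕ Fin n)}
    (h₁ : IsPath (extArcs A s t n) x y p₁) (h₂ : IsPath (extArcs A s t n) x y p₂)
    (hdisj : ∀ z ∈ p₁, z ∈ p₂ → z = x ∨ z = y) (hl₁ : p₁.length = n + 1)
    (hl₂ : p₂.length = n + 1) (hcover : ∀ z, z ∈ p₁ ∨ z ∈ p₂) (h0 : .inr ⟨0, by omega⟩ ∈ p₁) :
    ∃ p : List V, IsPath A s t p ∧ ∀ v, v ∈ p := by
  obtain rfl := eq_extPath_of_isPath_of_isPath hn h₁ h₂ hdisj hl₁ hl₂ h0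
  obtain rfl : x = .inl s := h₁.getElem_zero.symm
  obtain rfl : y = .inr ⟨n - 1, Nat.sub_one_lt_of_lt hn⟩ :=
    (h₁.getElem_eq_right (i := n) (by simp)).symm.trans
      (by simp [List.getElem_cons, show n ≠ 0 by omega])
  obtain ⟨L, rfl⟩ := List.getLast?_eq_some_iff.1 h₂.getLast?_eq
  obtain ⟨p, rfl⟩ : ∃ p : List V, L = p.map .inl := by
    refine List.exists_eq_map_inl fun z hz => ?_
    rcases z with v | j
    · rfl
    have hy := (List.nodup_append.1 h₂.nodup).2.2 _ hz _ (List.mem_singleton_self _)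
    simpa [hy] using hdisj (.inr j) (by simp) (by simp [hz])
  rw [isPath_extArcs_map_inl_append_iff hn] at h₂
  refine ⟨p, h₂, fun v => ?_⟩
  rcases hcover (.inl v) with h | h
  · obtain rfl : v = s := by simpa using h
    exact List.mem_of_mem_head? h₂.head?_eq
  · simpa using h

end Extension

theorem stmt7_general {V : Type*} [Fintype V] (A : V → V → Prop) (s t : V)
    (n : ℕ) (hn : n = Fintype.card V) (hn2 : 2 ≤ n) :
    (∃ (x y : V ⊕ Fin n) (p1 p2 : List (V ⊕ Fin n)),
        p1 ≠ p2 ∧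
        IsPath (extArcs A s t n) x y p1 ∧ IsPath (extArcs A s t n) x y p2 ∧
        (∀ z, z ∈ p1 → z ∈ p2 → z = x ∨ z = y) ∧
        n + 1 ≤ p1.length ∧ n + 1 ≤ p2.length) ↔
      ∃ p : List V, IsPath A s t p ∧ ∀ v : V, v ∈ p := by
  have hcard : Fintype.card (V ⊕ Fin n) = 2 * n := by simp [← hn]; ring
  constructor
  · rintro ⟨x, y, p₁, p₂, -, h₁, h₂, hdisj, hl₁, hl₂⟩
    have hle := List.length_add_length_le_card_add_two h₁.nodup h₂.nodup hdisj
    have hcover := List.mem_or_mem_of_card_add_two_le h₁.nodup h₂.nodup hdisj (by omega)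
    rcases hcover (.inr ⟨0, by omega⟩) with h0 | h0
    · exact exists_hamiltonian_of_isPath_of_isPath hn2 h₁ h₂ hdisj (by omega) (by omega)
        hcover h0
    · exact exists_hamiltonian_of_isPath_of_isPath hn2 h₂ h₁ (fun z h₂ h₁ => hdisj z h₁ h₂)
        (by omega) (by omega) (fun z => (hcover z).symm) h0
  · rintro ⟨p, hp, hcover⟩
    have hlen : p.length = n := hn ▸ hp.nodup.length_eq_card hcover
    refine ⟨.inl s, .inr ⟨n - 1, by omega⟩, p.map .inl ++ [.inr ⟨n - 1, by omega⟩],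
      extPath s n, ?_, (isPath_extArcs_map_inl_append_iff hn2).2 hp,
      isPath_extPath (by omega), ?_, by simp [hlen], by simp⟩
    · intro h
      have h0 : (.inr ⟨0, by omega⟩ : V ⊕ Fin n) ∈ p.map .inl ++ [.inr ⟨n - 1, by omega⟩] := by
        simp [h]
      simp at h0
      omega
    · rintro (v | j) hz₁ hz₂ <;> simp_all

/-- There exist vertices `x, y` of `G'` and two paths from `x` to `y` in `G'`
sharing no vertices other than `x` and `y`, each containing at least `n + 1`
vertices, iff `G` has a Hamiltonian path from `s` to `t`. -/
theorem stmt7 {V : Type*} [Fintype V] (A : V → V → Prop) (s t : V) (hst : s ≠ t)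
    (n : ℕ) (hn : n = Fintype.card V) (hn2 : 2 ≤ n) :
    (∃ (x y : V ⊕ Fin n) (p1 p2 : List (V ⊕ Fin n)),
        p1 ≠ p2 ∧
        IsPath (extArcs A s t n) x y p1 ∧ IsPath (extArcs A s t n) x y p2 ∧
        (∀ z, z ∈ p1 → z ∈ p2 → z = x ∨ z = y) ∧
        n + 1 ≤ p1.length ∧ n + 1 ≤ p2.length) ↔
      ∃ p : List V, IsPath A s t p ∧ ∀ v : V, v ∈ p :=
  stmt7_general A s t n hn hn2
end

section
/- Let G be a directed graph with strictly positive rational arc weights, let s ≠ t be vertices, and let M ∈ ℚ≥0. Let G′ be obtained from G by adding a new arc e0 from s to t with weight 0 (in addition to any existing arcs from s to t). Then there exist a vertex y and three pairwise distinct nonempty paths p1, p2, p3 in G′, each from s to y, pairwise sharing no vertices other than s and y, with |p1| ≤ M, |p2| ≤ M and |p3| ≤ 0, if and only if G contains two distinct paths from s to t that share no vertices other than s and t and each have length at most M. -/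
/-- `es` is a nonempty simple path from `x` to `y` in the directed multigraph
with arcs `E`, source map `src` and target map `tgt`, given as its list of
arcs: it is nonempty, consecutive arcs are incident, it starts at `x`, ends at
`y`, and visits no vertex twice. -/
def IsEPath {V E : Type*} (src tgt : E → V) (x y : V) (es : List E) : Prop :=
  es ≠ [] ∧ es.head?.map src = some x ∧ es.getLast?.map tgt = some y ∧
  es.Chain' (fun e f => tgt e = src f) ∧ (x :: es.map tgt).Nodup

/-- The list of vertices visited by a path starting at `x` with arc list `es`. -/
def ePathVerts {V E : Type*} (tgt : E → V) (x : V) (es : List E) : List V :=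
  x :: es.map tgt

/-- The length of a path: the sum of the weights of its arcs. -/
def ePathLen {E : Type*} (w : E → ℚ) (es : List E) : ℚ := (es.map w).sum

/-! Since the arcs of `G` have positive weight, a path of length `≤ 0` in `G'` uses only the
new arc `e0`, and being simple it is `e0` alone; so `y = t` and `p3 = [e0]`. An `s`-`t` path
containing the arc `e0 : s → t` must be `[e0]`, so `p1` and `p2` avoid `e0` and are paths of `G`.
Conversely, two such paths of `G` together with `[e0]` form the required triple. -/

namespace IsEPath

variable {V E : Type*} {src tgt : E → V} {x y : V}

theorem nodup {es : List E} (h : IsEPath src tgt x y es) : es.Nodup :=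
  (List.nodup_cons.mp h.2.2.2.2).2.of_map tgt

theorem singleton_iff {e : E} :
    IsEPath src tgt x y [e] ↔ src e = x ∧ tgt e = y ∧ x ≠ y := by
  refine ⟨fun ⟨_, hx, hy, _, hnd⟩ => ?_, fun ⟨hx, hy, hxy⟩ =>
    ⟨List.cons_ne_nil _ _, by simp [hx], by simp [hy], List.IsChain.singleton e,
      by simp [hy, hxy]⟩⟩
  simp only [List.head?_cons, List.getLast?_singleton, Option.map_some, Option.some.injEq] at hx hy
  simp_all

theorem eq_singleton_of_forall_eq {es : List E} {e : E} (h : IsEPath src tgt x y es)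
    (he : ∀ f ∈ es, f = e) : es = [e] := by
  have hnd := h.nodup
  rcases es with _ | ⟨a, _ | ⟨b, l⟩⟩
  · exact absurd rfl h.1
  · simp [he a (by simp)]
  · simp [he a (by simp), he b (by simp)] at hnd

theorem eq_singleton_of_mem {es : List E} {e : E} (h : IsEPath src tgt x y es)
    (he : e ∈ es) (hsrc : src e = x) (htgt : tgt e = y) : es = [e] := by
  obtain ⟨-, -, hlast, hchain, hnodup⟩ := h
  obtain ⟨a, b, rfl⟩ := List.append_of_mem he
  obtain rfl : a = [] := by
    rcases a.eq_nil_or_concat with rfl | ⟨a, f, rfl⟩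
    · rfl
    have hf : tgt f = x := by
      rw [← hsrc]
      exact (List.isChain_append.mp hchain).2.2 f (by simp) e (by simp)
    exact absurd (List.mem_map.mpr ⟨f, by simp, hf⟩) (List.nodup_cons.mp hnodup).1
  rcases b.eq_nil_or_concat with rfl | ⟨b, g, rfl⟩
  · rfl
  rw [List.nil_append, List.concat_eq_append, ← List.cons_append, List.getLast?_concat] at hlast
  have hg : tgt g = tgt e := by simpa [htgt] using hlast
  have hnd := (List.nodup_cons.mp hnodup).2
  simp only [List.nil_append, List.map_cons, List.concat_eq_append, List.nodup_cons] at hnd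
  exact absurd (List.mem_map.mpr ⟨g, by simp, hg⟩) hnd.1

end IsEPath

theorem List.exists_eq_map_some_of_none_notMem {α : Type*} {l : List (Option α)}
    (h : none ∉ l) : ∃ l' : List α, l = l'.map some := by
  induction l with
  | nil => exact ⟨[], rfl⟩
  | cons a l ih =>
    obtain ⟨l', rfl⟩ := ih (fun h' => h (List.mem_cons_of_mem _ h'))
    obtain ⟨b, rfl⟩ := Option.ne_none_iff_exists'.mp (fun ha => h (ha ▸ List.mem_cons_self))
    exact ⟨b :: l', rfl⟩

section AddedArc

variable {V E : Type*} {src tgt : E → V} {a b x y : V}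

theorem isEPath_map_some {q : List E} :
    IsEPath (fun e => e.elim a src) (fun e => e.elim b tgt) x y (q.map some) ↔
      IsEPath src tgt x y q := by
  have hchain : (q.map some).IsChain (fun e f : Option E => e.elim b tgt = f.elim a src) ↔
      q.IsChain (fun e f => tgt e = src f) := List.isChain_map some
  simp only [IsEPath, List.head?_map, List.getLast?_map, List.map_map,
    Option.map_map, show ((fun e : Option E => e.elim b tgt) ∘ some) = tgt from rfl,
    show ((fun e : Option E => e.elim a src) ∘ some) = src from rfl, ne_eq, List.map_eq_nil_iff]
  exact and_congr_right fun _ => and_congr_right fun _ => and_congr_right fun _ =>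
    and_congr_left fun _ => hchain

theorem ePathVerts_map_some (q : List E) :
    ePathVerts (fun e => e.elim b tgt) x (q.map some) = ePathVerts tgt x q := by
  simp [ePathVerts, List.map_map, show ((fun e : Option E => e.elim b tgt) ∘ some) = tgt from rfl]

theorem ePathLen_map_some (w : E → ℚ) (q : List E) :
    ePathLen (fun e => e.elim 0 w) (q.map some) = ePathLen w q := by
  simp [ePathLen, List.map_map, show ((fun e : Option E => e.elim 0 w) ∘ some) = w from rfl]

theorem eq_none_of_ePathLen_nonpos {w : E → ℚ} (hw : ∀ e, 0 < w e) {p : List (Option E)}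
    (hp : ePathLen (fun e => e.elim 0 w) p ≤ 0) : ∀ e ∈ p, e = none := by
  have hnonneg : ∀ x ∈ p.map (fun e => e.elim 0 w), 0 ≤ x := by
    intro x hx
    obtain ⟨e, -, rfl⟩ := List.mem_map.mp hx
    cases e <;> simp [(hw _).le]
  rintro (_ | f) hf
  · rfl
  · have hle := List.single_le_sum hnonneg (w f)
      (List.mem_map_of_mem (f := fun e => e.elim 0 w) hf)
    exact absurd (hle.trans hp) (hw f).not_ge

end AddedArc

theorem stmt8_general {V E : Type*} (src tgt : E → V) (w : E → ℚ) (hw : ∀ e, 0 < w e)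
    (s t : V) (hst : s ≠ t) (M : ℚ) :
    (∃ (y : V) (p1 p2 p3 : List (Option E)),
        p1 ≠ p2 ∧ p1 ≠ p3 ∧ p2 ≠ p3 ∧
        IsEPath (fun e => e.elim s src) (fun e => e.elim t tgt) s y p1 ∧
        IsEPath (fun e => e.elim s src) (fun e => e.elim t tgt) s y p2 ∧
        IsEPath (fun e => e.elim s src) (fun e => e.elim t tgt) s y p3 ∧
        (∀ z, z ∈ ePathVerts (fun e => e.elim t tgt) s p1 →
            z ∈ ePathVerts (fun e => e.elim t tgt) s p2 → z = s ∨ z = y) ∧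
        (∀ z, z ∈ ePathVerts (fun e => e.elim t tgt) s p1 →
            z ∈ ePathVerts (fun e => e.elim t tgt) s p3 → z = s ∨ z = y) ∧
        (∀ z, z ∈ ePathVerts (fun e => e.elim t tgt) s p2 →
            z ∈ ePathVerts (fun e => e.elim t tgt) s p3 → z = s ∨ z = y) ∧
        ePathLen (fun e => e.elim 0 w) p1 ≤ M ∧
        ePathLen (fun e => e.elim 0 w) p2 ≤ M ∧
        ePathLen (fun e => e.elim 0 w) p3 ≤ 0) ↔
      (∃ q1 q2 : List E, q1 ≠ q2 ∧
        IsEPath src tgt s t q1 ∧ IsEPath src tgt s t q2 ∧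
        (∀ z, z ∈ ePathVerts tgt s q1 → z ∈ ePathVerts tgt s q2 → z = s ∨ z = t) ∧
        ePathLen w q1 ≤ M ∧ ePathLen w q2 ≤ M) := by
  constructor
  · rintro ⟨y, p1, p2, p3, h12, h13, h23, hp1, hp2, hp3, d12, -, -, l1, l2, l3⟩
    obtain rfl : p3 = [none] := hp3.eq_singleton_of_forall_eq (eq_none_of_ePathLen_nonpos hw l3)
    obtain rfl : y = t := (IsEPath.singleton_iff.mp hp3).2.1.symm
    -- the added arc runs from `s` to `t`, so any `s`-`t` path through it is `[none]` itself
    obtain ⟨q1, rfl⟩ := List.exists_eq_map_some_of_none_notMem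
      fun h => h13 (hp1.eq_singleton_of_mem h rfl rfl)
    obtain ⟨q2, rfl⟩ := List.exists_eq_map_some_of_none_notMem
      fun h => h23 (hp2.eq_singleton_of_mem h rfl rfl)
    rw [isEPath_map_some] at hp1 hp2
    rw [ePathVerts_map_some, ePathVerts_map_some] at d12
    rw [ePathLen_map_some] at l1 l2
    exact ⟨q1, q2, fun h => h12 (h ▸ rfl), hp1, hp2, d12, l1, l2⟩
  · rintro ⟨q1, q2, hq, hq1, hq2, hd, hl1, hl2⟩
    have hnone : IsEPath (fun e => e.elim s src) (fun e => e.elim t tgt) s t [none] :=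
      IsEPath.singleton_iff.mpr ⟨rfl, rfl, hst⟩
    have hverts : ∀ z, z ∈ ePathVerts (fun e => e.elim t tgt) s [none] → z = s ∨ z = t := by
      simp [ePathVerts]
    refine ⟨t, q1.map some, q2.map some, [none], (List.map_injective_iff.mpr
      (Option.some_injective E)).ne hq, by cases q1 <;> simp, by cases q2 <;> simp,
      isEPath_map_some.mpr hq1, isEPath_map_some.mpr hq2, hnone, ?_,
      fun z _ => hverts z, fun z _ => hverts z, ?_, ?_, by simp [ePathLen]⟩
    · simpa only [ePathVerts_map_some] using hd
    · rwa [ePathLen_map_some]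
    · rwa [ePathLen_map_some]

/-- Let `G'` be obtained from `G` (strictly positive weights) by adding a new
arc `e0 = none` from `s` to `t` of weight `0`.  There exist a vertex `y` and
three pairwise distinct nonempty paths `p1, p2, p3` in `G'`, each from `s` to
`y`, pairwise sharing no vertices other than `s` and `y`, with `|p1| ≤ M`,
`|p2| ≤ M` and `|p3| ≤ 0`, iff `G` contains two distinct paths from `s` to `t`
sharing no vertices other than `s` and `t`, each of length at most `M`. -/
theorem stmt8 {V E : Type*} (src tgt : E → V) (w : E → ℚ) (hw : ∀ e, 0 < w e)
    (s t : V) (hst : s ≠ t) (M : ℚ) (hM : 0 ≤ M) :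
    (∃ (y : V) (p1 p2 p3 : List (Option E)),
        p1 ≠ p2 ∧ p1 ≠ p3 ∧ p2 ≠ p3 ∧
        IsEPath (fun e => e.elim s src) (fun e => e.elim t tgt) s y p1 ∧
        IsEPath (fun e => e.elim s src) (fun e => e.elim t tgt) s y p2 ∧
        IsEPath (fun e => e.elim s src) (fun e => e.elim t tgt) s y p3 ∧
        (∀ z, z ∈ ePathVerts (fun e => e.elim t tgt) s p1 →
            z ∈ ePathVerts (fun e => e.elim t tgt) s p2 → z = s ∨ z = y) ∧
        (∀ z, z ∈ ePathVerts (fun e => e.elim t tgt) s p1 →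
            z ∈ ePathVerts (fun e => e.elim t tgt) s p3 → z = s ∨ z = y) ∧
        (∀ z, z ∈ ePathVerts (fun e => e.elim t tgt) s p2 →
            z ∈ ePathVerts (fun e => e.elim t tgt) s p3 → z = s ∨ z = y) ∧
        ePathLen (fun e => e.elim 0 w) p1 ≤ M ∧
        ePathLen (fun e => e.elim 0 w) p2 ≤ M ∧
        ePathLen (fun e => e.elim 0 w) p3 ≤ 0) ↔
      (∃ q1 q2 : List E, q1 ≠ q2 ∧
        IsEPath src tgt s t q1 ∧ IsEPath src tgt s t q2 ∧
        (∀ z, z ∈ ePathVerts tgt s q1 → z ∈ ePathVerts tgt s q2 → z = s ∨ z = t) ∧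
        ePathLen w q1 ≤ M ∧ ePathLen w q2 ≤ M) :=
  stmt8_general src tgt w hw s t hst M
end
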